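/- With the lifting setup below for both C and D, suppose C and D are homotopy equivalent via chain maps ψ : C → D and ζ : D → C with ψ∘ζ homotopic to id_D and ζ∘ψ homotopic to id_C. Then for each k, the Eisenbud operator t_k of C is homotopic to ζ∘s_k∘ψ and the Eisenbud operator s_k of D is homotopic to ψ∘t_k∘ζ; explicitly, there exist R-linear maps λ_n : C_n → C_{n−1} with t_{k,n} − ζ_{n−2}∘s_{k,n}∘ψ_n = d^C_{n−1}∘λ_n + λ_{n−1}∘d^C_n, and R-linear maps μ_n : D_n → D_{n−1} with s_{k,n} − ψ_{n−2}∘t_{k,n}∘ζ_n = d^D_{n−1}∘μ_n + μ_{n−1}∘d^D_n. -/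

import Mathlib

/-!
Lift `ζ` to `Q`-linear maps `ζ̃`. Modulo `(f)` they commute with the differentials, so
`d̃ ζ̃ - ζ̃ d̃ = ∑ⱼ fⱼ τⱼ`. Expanding `d̃ d̃ ζ̃ - ζ̃ d̃ d̃` with `d̃ d̃ = ∑ⱼ fⱼ t̃ⱼ` gives the relation
`∑ⱼ fⱼ (t̃ⱼ ζ̃ - ζ̃ s̃ⱼ - d̃ τⱼ - τⱼ d̃) = 0`. Since `f` is regular, every such relation on a free
module has all coefficients in `(f)` (the first Koszul homology vanishes), so over `R` the map
`τ_k` is a homotopy `t_k ζ ≃ ζ s_k`. The same argument applied to `d` itself shows that `t_k` is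
a chain map, hence `t_k ≃ t_k ζ ψ ≃ ζ s_k ψ`. Exchanging the roles of `C` and `D` gives the
statement for `s_k`.
-/

open TensorProduct

abbrev Rquot (Q : Type) [CommRing Q] {c : ℕ} (f : Fin c → Q) : Type :=
  Q ⧸ Ideal.span (Set.range f)

open RingTheory.Sequence

section Koszul

variable {Q M : Type*} [CommRing Q] [AddCommGroup M] [Module Q M]

theorem Ideal.ofList_ofFn {c : ℕ} (f : Fin c → Q) :
    Ideal.ofList (List.ofFn f) = Ideal.span (Set.range f) := by
  simp only [Ideal.ofList, List.mem_ofFn]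
  rfl

theorem Submodule.mem_span_range_smul_top_iff {ι : Type*} [Fintype ι] (f : ι → Q) (m : M) :
    m ∈ Ideal.span (Set.range f) • (⊤ : Submodule Q M) ↔ ∃ v : ι → M, m = ∑ k, f k • v k := by
  constructor
  · intro h
    refine Submodule.smul_induction_on h (fun r hr m _ => ?_) ?_
    · obtain ⟨u, rfl⟩ := (Submodule.mem_span_range_iff_exists_fun Q).1 hr
      exact ⟨fun k => u k • m, by simp [Finset.sum_smul, smul_smul, mul_comm]⟩
    · rintro x y ⟨v, rfl⟩ ⟨w, rfl⟩
      exact ⟨v + w, by simp [smul_add, Finset.sum_add_distrib]⟩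
  · rintro ⟨v, rfl⟩
    exact Submodule.sum_mem _ fun k _ =>
      Submodule.smul_mem_smul (Ideal.subset_span ⟨k, rfl⟩) Submodule.mem_top

theorem RingTheory.Sequence.IsWeaklyRegular.mem_span_range_smul_top_of_sum_smul_eq_zero {c : ℕ} {f : Fin c → Q}
    (hf : IsWeaklyRegular M (List.ofFn f)) {m : Fin c → M} (hm : ∑ k, f k • m k = 0)
    (k : Fin c) : m k ∈ Ideal.span (Set.range f) • (⊤ : Submodule Q M) := by
  induction c with
  | zero => exact k.elim0
  | succ c ih =>
    set a := f (Fin.last c)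
    set J := Ideal.span (Set.range fun i : Fin c => f i.castSucc)
    rw [List.ofFn_succ', List.concat_eq_append, isWeaklyRegular_append_iff,
      isWeaklyRegular_singleton_iff, Ideal.ofList_ofFn] at hf
    obtain ⟨hinit, hlast⟩ := hf
    rw [Fin.sum_univ_castSucc] at hm
    have hJ : J ≤ Ideal.span (Set.range f) := Ideal.span_mono (Set.range_comp_subset_range _ _)
    have ha : a ∈ Ideal.span (Set.range f) := Ideal.subset_span ⟨_, rfl⟩
    have hm_last : m (Fin.last c) ∈ J • (⊤ : Submodule Q M) := by
      have hmul : a • m (Fin.last c) ∈ J • (⊤ : Submodule Q M) := by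
        rw [eq_neg_of_add_eq_zero_right hm, neg_mem_iff, Submodule.mem_span_range_smul_top_iff]
        exact ⟨_, rfl⟩
      rw [← Submodule.Quotient.mk_eq_zero] at hmul ⊢
      exact hlast (show a • _ = a • 0 by rw [← Submodule.Quotient.mk_smul, hmul, smul_zero])
    obtain ⟨u, hu⟩ := (Submodule.mem_span_range_smul_top_iff _ _).1 hm_last
    have hsyz : ∑ i : Fin c, f i.castSucc • (m i.castSucc + a • u i) = 0 := by
      simp only [smul_add, Finset.sum_add_distrib, smul_comm _ a, ← Finset.smul_sum, ← hu]
      exact hm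
    refine Fin.lastCases (Submodule.smul_mono_left hJ hm_last) (fun i => ?_) k
    rw [← add_sub_cancel_right (m i.castSucc) (a • u i)]
    exact sub_mem (Submodule.smul_mono_left hJ (ih hinit hsyz i))
      (Submodule.smul_mem_smul ha Submodule.mem_top)

end Koszul

section BaseChange

variable {Q M N : Type*} [CommRing Q] [AddCommGroup M] [Module Q M] [AddCommGroup N]
  [Module Q N]

theorem TensorProduct.one_tmul_eq_zero_iff_mem_smul_top {I : Ideal Q} (m : M) :
    (1 : Q ⧸ I) ⊗ₜ[Q] m = 0 ↔ m ∈ I • (⊤ : Submodule Q M) := by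
  rw [← (quotTensorEquivQuotSMul M I).map_eq_zero_iff, quotTensorEquivQuotSMul_mk_one_tmul,
    Submodule.Quotient.mk_eq_zero]

theorem LinearMap.baseChange_quotient_eq_zero_iff {I : Ideal Q} (T : M →ₗ[Q] N) :
    T.baseChange (Q ⧸ I) = 0 ↔ ∀ m, T m ∈ I • (⊤ : Submodule Q N) := by
  simp_rw [← TensorProduct.one_tmul_eq_zero_iff_mem_smul_top (I := I)]
  refine ⟨fun h m => by simpa using LinearMap.congr_fun h (1 ⊗ₜ m), fun h => ?_⟩
  refine TensorProduct.AlgebraTensorModule.ext fun r m => ?_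
  rw [baseChange_tmul, zero_apply, ← mul_one r, ← smul_eq_mul, ← smul_tmul', h m, smul_zero]

theorem LinearMap.exists_baseChange_quotient_eq [Module.Free Q M] {I : Ideal Q}
    (g : (Q ⧸ I) ⊗[Q] M →ₗ[Q ⧸ I] (Q ⧸ I) ⊗[Q] N) :
    ∃ T : M →ₗ[Q] N, T.baseChange (Q ⧸ I) = g := by
  let b := Module.Free.chooseBasis Q M
  choose v hv using fun i =>
    TensorProduct.mk_surjective Q N (Q ⧸ I) Ideal.Quotient.mk_surjective (g (1 ⊗ₜ b i))
  exact ⟨b.constr Q v, (b.baseChange (Q ⧸ I)).ext fun i => by simpa using hv i⟩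

theorem LinearMap.exists_eq_sum_smul_of_baseChange_eq_zero [Module.Free Q M] {ι : Type*}
    [Fintype ι] {f : ι → Q} {T : M →ₗ[Q] N}
    (hT : T.baseChange (Q ⧸ Ideal.span (Set.range f)) = 0) :
    ∃ σ : ι → M →ₗ[Q] N, T = ∑ k, f k • σ k := by
  let b := Module.Free.chooseBasis Q M
  choose v hv using fun i => (Submodule.mem_span_range_smul_top_iff f _).1
    ((T.baseChange_quotient_eq_zero_iff.1 hT) (b i))
  exact ⟨fun k => b.constr Q fun i => v i k, b.ext fun i => by simp [hv]⟩

theorem LinearMap.baseChange_eq_zero_of_sum_smul_eq_zero [Module.Free Q N] {c : ℕ}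
    {f : Fin c → Q} (hf : IsWeaklyRegular Q (List.ofFn f)) {A : Fin c → M →ₗ[Q] N}
    (hA : ∀ x, ∑ j, f j • A j x = 0) (k : Fin c) :
    (A k).baseChange (Q ⧸ Ideal.span (Set.range f)) = 0 := by
  have hfN : IsWeaklyRegular N (List.ofFn f) :=
    ((TensorProduct.lid Q N).isWeaklyRegular_congr _).1 hf.isWeaklyRegular_rTensor
  exact (A k).baseChange_quotient_eq_zero_iff.2 fun x =>
    hfN.mem_span_range_smul_top_of_sum_smul_eq_zero (hA x) k

end BaseChange

theorem exists_homotopy_sub_comp_comp {R : Type*} [Ring R] {C D : ℤ → Type*}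
    [∀ n, AddCommGroup (C n)] [∀ n, Module R (C n)] [∀ n, AddCommGroup (D n)]
    [∀ n, Module R (D n)] {dC : ∀ n : ℤ, C (n + 1) →ₗ[R] C n} {dD : ∀ n : ℤ, D (n + 1) →ₗ[R] D n}
    {ψ : ∀ n, C n →ₗ[R] D n} {ζ : ∀ n, D n →ₗ[R] C n}
    {t : ∀ n : ℤ, C (n + 1 + 1) →ₗ[R] C n} {s : ∀ n : ℤ, D (n + 1 + 1) →ₗ[R] D n}
    (hψ : ∀ n x, ψ n (dC n x) = dD n (ψ (n + 1) x))
    (ht : ∀ n x, t n (dC (n + 1 + 1) x) = dC n (t (n + 1) x))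
    {τ : ∀ n : ℤ, D (n + 1) →ₗ[R] C n}
    (hτ : ∀ n y, t n (ζ (n + 1 + 1) y) - ζ n (s n y) = dC n (τ (n + 1) y) + τ n (dD (n + 1) y))
    {G : ∀ n : ℤ, C n →ₗ[R] C (n + 1)}
    (hG : ∀ n x, ζ (n + 1) (ψ (n + 1) x) - x = dC (n + 1) (G (n + 1) x) + G n (dC n x)) :
    ∃ lam : ∀ n : ℤ, C (n + 1) →ₗ[R] C n, ∀ n x,
      t n x - ζ n (s n (ψ (n + 1 + 1) x)) = dC n (lam (n + 1) x) + lam n (dC (n + 1) x) := by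
  refine ⟨fun n => τ n ∘ₗ ψ (n + 1) - t n ∘ₗ G (n + 1), fun n x => ?_⟩
  have hG' := congrArg (t n) (hG (n + 1) x)
  rw [map_sub, map_add, ht] at hG'
  simp only [LinearMap.sub_apply, LinearMap.comp_apply, map_sub, hψ]
  rw [eq_sub_of_add_eq (hτ n (ψ (n + 1 + 1) x)).symm]
  linear_combination (norm := abel) -hG'

section EisenbudOperators

variable {Q : Type} [CommRing Q] {c : ℕ} {f : Fin c → Q} {C D : ℤ → Type*}
  [∀ n, AddCommGroup (C n)] [∀ n, Module Q (C n)] [∀ n, AddCommGroup (D n)] [∀ n, Module Q (D n)]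
  {dC : ∀ n : ℤ, C (n + 1) →ₗ[Q] C n} {dD : ∀ n : ℤ, D (n + 1) →ₗ[Q] D n}
  {tC : Fin c → ∀ n : ℤ, C (n + 1 + 1) →ₗ[Q] C n} {tD : Fin c → ∀ n : ℤ, D (n + 1 + 1) →ₗ[Q] D n}

theorem eisenbud_comp_sub_comp_eq_of_sum_smul (hf : IsWeaklyRegular Q (List.ofFn f))
    (hddC : ∀ (n : ℤ) (x : C (n + 1 + 1)), dC n (dC (n + 1) x) = ∑ k, f k • tC k n x)
    (hddD : ∀ (n : ℤ) (x : D (n + 1 + 1)), dD n (dD (n + 1) x) = ∑ k, f k • tD k n x)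
    {φ : ∀ n, C n →ₗ[Q] D n} {σ : ∀ n : ℤ, Fin c → C (n + 1) →ₗ[Q] D n}
    (hσ : ∀ n x, dD n (φ (n + 1) x) - φ n (dC n x) = ∑ j, f j • σ n j x)
    (k : Fin c) (n : ℤ) [Module.Free Q (D n)] (y : Rquot Q f ⊗[Q] C (n + 1 + 1)) :
    (tD k n).baseChange _ ((φ (n + 1 + 1)).baseChange _ y) -
        (φ n).baseChange _ ((tC k n).baseChange _ y) =
      (dD n).baseChange _ ((σ (n + 1) k).baseChange _ y) +
        (σ n k).baseChange _ ((dC (n + 1)).baseChange _ y) := by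
  have hsyz : ∀ x, ∑ j, f j • (tD j n ∘ₗ φ (n + 1 + 1) - φ n ∘ₗ tC j n -
      dD n ∘ₗ σ (n + 1) j - σ n j ∘ₗ dC (n + 1)) x = 0 := by
    intro x
    simp only [LinearMap.sub_apply, LinearMap.comp_apply, smul_sub, Finset.sum_sub_distrib]
    have e1 : ∑ j, f j • tD j n (φ (n + 1 + 1) x) = dD n (dD (n + 1) (φ (n + 1 + 1) x)) :=
      (hddD n _).symm
    have e2 : ∑ j, f j • φ n (tC j n x) = φ n (dC n (dC (n + 1) x)) := by
      simp only [hddC, map_sum, map_smul]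
    have e3 : ∑ j, f j • dD n (σ (n + 1) j x) =
        dD n (dD (n + 1) (φ (n + 1 + 1) x) - φ (n + 1) (dC (n + 1) x)) := by
      simp only [hσ, map_sum, map_smul]
    have e4 : ∑ j, f j • σ n j (dC (n + 1) x) =
        dD n (φ (n + 1) (dC (n + 1) x)) - φ n (dC n (dC (n + 1) x)) :=
      (hσ n _).symm
    rw [e1, e2, e3, e4, map_sub]
    abel
  have h := LinearMap.congr_fun (LinearMap.baseChange_eq_zero_of_sum_smul_eq_zero hf hsyz k) y
  simp only [LinearMap.baseChange_sub, LinearMap.baseChange_comp, LinearMap.sub_apply,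
    LinearMap.comp_apply, LinearMap.zero_apply] at h
  linear_combination (norm := abel) h

theorem eisenbud_comp_differential_eq_differential_comp (hf : IsWeaklyRegular Q (List.ofFn f))
    (hddC : ∀ (n : ℤ) (x : C (n + 1 + 1)), dC n (dC (n + 1) x) = ∑ k, f k • tC k n x)
    (k : Fin c) (n : ℤ) [Module.Free Q (C n)] (y : Rquot Q f ⊗[Q] C (n + 1 + 1 + 1)) :
    (tC k n).baseChange _ ((dC (n + 1 + 1)).baseChange _ y) =
      (dC n).baseChange _ ((tC k (n + 1)).baseChange _ y) := by
  -- `d` is a chain map `C[1] → C` lifting to one that commutes with the differentials exactly.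
  simpa [sub_eq_zero] using eisenbud_comp_sub_comp_eq_of_sum_smul (C := fun n => C (n + 1))
    (dC := fun n => dC (n + 1)) (tC := fun k n => tC k (n + 1)) (φ := dC) (σ := 0) hf
    (fun n => hddC (n + 1)) hddC (by simp) k n y

theorem exists_homotopy_eisenbud_sub_comp_eisenbud_comp (hf : IsWeaklyRegular Q (List.ofFn f))
    [∀ n, Module.Free Q (C n)] [∀ n, Module.Free Q (D n)]
    (hddC : ∀ (n : ℤ) (x : C (n + 1 + 1)), dC n (dC (n + 1) x) = ∑ k, f k • tC k n x)
    (hddD : ∀ (n : ℤ) (x : D (n + 1 + 1)), dD n (dD (n + 1) x) = ∑ k, f k • tD k n x)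
    {ψ : ∀ n : ℤ, (Rquot Q f ⊗[Q] C n) →ₗ[Rquot Q f] (Rquot Q f ⊗[Q] D n)}
    {ζ : ∀ n : ℤ, (Rquot Q f ⊗[Q] D n) →ₗ[Rquot Q f] (Rquot Q f ⊗[Q] C n)}
    (hψ : ∀ n x, ψ n ((dC n).baseChange _ x) = (dD n).baseChange _ (ψ (n + 1) x))
    (hζ : ∀ n y, ζ n ((dD n).baseChange _ y) = (dC n).baseChange _ (ζ (n + 1) y))
    (hζψ : ∃ h : ∀ n : ℤ, (Rquot Q f ⊗[Q] C n) →ₗ[Rquot Q f] (Rquot Q f ⊗[Q] C (n + 1)),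
      ∀ n x, ζ (n + 1) (ψ (n + 1) x) - x =
        (dC (n + 1)).baseChange _ (h (n + 1) x) + h n ((dC n).baseChange _ x))
    (k : Fin c) :
    ∃ lam : ∀ n : ℤ, (Rquot Q f ⊗[Q] C (n + 1)) →ₗ[Rquot Q f] (Rquot Q f ⊗[Q] C n),
      ∀ n x, (tC k n).baseChange _ x - ζ n ((tD k n).baseChange _ (ψ (n + 1 + 1) x)) =
        (dC n).baseChange _ (lam (n + 1) x) + lam n ((dC (n + 1)).baseChange _ x) := by
  obtain ⟨G, hG⟩ := hζψ
  choose ζt hζt using fun n => LinearMap.exists_baseChange_quotient_eq (ζ n)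
  obtain rfl : ζ = fun n => (ζt n).baseChange _ := funext fun n => (hζt n).symm
  have hchain : ∀ n, (dC n ∘ₗ ζt (n + 1) - ζt n ∘ₗ dD n).baseChange (Rquot Q f) = 0 :=
    fun n => LinearMap.ext fun y => by
      simp [LinearMap.baseChange_sub, LinearMap.baseChange_comp, hζ]
  choose τ hτ using fun n => LinearMap.exists_eq_sum_smul_of_baseChange_eq_zero (hchain n)
  exact exists_homotopy_sub_comp_comp (C := fun n => Rquot Q f ⊗[Q] C n)
    (D := fun n => Rquot Q f ⊗[Q] D n) (τ := fun n => (τ n k).baseChange _) hψ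
    (fun n => eisenbud_comp_differential_eq_differential_comp hf hddC k n)
    (fun n => eisenbud_comp_sub_comp_eq_of_sum_smul hf hddD hddC
      (fun n x => by simpa using LinearMap.congr_fun (hτ n) x) k n) hG

end EisenbudOperators

theorem eisenbud_operators_of_homotopy_equivalence_general
    (Q : Type) [CommRing Q] (c : ℕ) (f : Fin c → Q)
    (hreg : RingTheory.Sequence.IsRegular Q (List.ofFn f))
    (Ct Dt : ℤ → Type)
    [∀ n, AddCommGroup (Ct n)] [∀ n, Module Q (Ct n)]
    [∀ n, AddCommGroup (Dt n)] [∀ n, Module Q (Dt n)]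
    (hCfree : ∀ n, Module.Free Q (Ct n))
    (hDfree : ∀ n, Module.Free Q (Dt n))
    (dtC : ∀ n : ℤ, Ct (n + 1) →ₗ[Q] Ct n)
    (dtD : ∀ n : ℤ, Dt (n + 1) →ₗ[Q] Dt n)
    (ttC : Fin c → ∀ n : ℤ, Ct (n + 1 + 1) →ₗ[Q] Ct n)
    (ttD : Fin c → ∀ n : ℤ, Dt (n + 1 + 1) →ₗ[Q] Dt n)
    (hddC : ∀ (n : ℤ) (x : Ct (n + 1 + 1)),
      dtC n (dtC (n + 1) x) = ∑ k, f k • ttC k n x)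
    (hddD : ∀ (n : ℤ) (x : Dt (n + 1 + 1)),
      dtD n (dtD (n + 1) x) = ∑ k, f k • ttD k n x)
    -- the chain maps `ψ : C → D` and `ζ : D → C`
    (ψ : ∀ n : ℤ, (Rquot Q f ⊗[Q] Ct n) →ₗ[Rquot Q f] (Rquot Q f ⊗[Q] Dt n))
    (ζ : ∀ n : ℤ, (Rquot Q f ⊗[Q] Dt n) →ₗ[Rquot Q f] (Rquot Q f ⊗[Q] Ct n))
    (hψ : ∀ (n : ℤ) (x : Rquot Q f ⊗[Q] Ct (n + 1)),
      ψ n ((dtC n).baseChange (Rquot Q f) x) =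
        (dtD n).baseChange (Rquot Q f) (ψ (n + 1) x))
    (hζ : ∀ (n : ℤ) (x : Rquot Q f ⊗[Q] Dt (n + 1)),
      ζ n ((dtD n).baseChange (Rquot Q f) x) =
        (dtC n).baseChange (Rquot Q f) (ζ (n + 1) x))
    -- `ψ ∘ ζ` is homotopic to the identity of `D`
    (hψζ : ∃ h : ∀ n : ℤ, (Rquot Q f ⊗[Q] Dt n) →ₗ[Rquot Q f] (Rquot Q f ⊗[Q] Dt (n + 1)),
      ∀ (n : ℤ) (x : Rquot Q f ⊗[Q] Dt (n + 1)),
        ψ (n + 1) (ζ (n + 1) x) - x =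
          (dtD (n + 1)).baseChange (Rquot Q f) (h (n + 1) x) +
            h n ((dtD n).baseChange (Rquot Q f) x))
    -- `ζ ∘ ψ` is homotopic to the identity of `C`
    (hζψ : ∃ h : ∀ n : ℤ, (Rquot Q f ⊗[Q] Ct n) →ₗ[Rquot Q f] (Rquot Q f ⊗[Q] Ct (n + 1)),
      ∀ (n : ℤ) (x : Rquot Q f ⊗[Q] Ct (n + 1)),
        ζ (n + 1) (ψ (n + 1) x) - x =
          (dtC (n + 1)).baseChange (Rquot Q f) (h (n + 1) x) +
            h n ((dtC n).baseChange (Rquot Q f) x)) :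
    ∀ k : Fin c,
      (∃ lam : ∀ n : ℤ, (Rquot Q f ⊗[Q] Ct (n + 1)) →ₗ[Rquot Q f] (Rquot Q f ⊗[Q] Ct n),
        ∀ (n : ℤ) (x : Rquot Q f ⊗[Q] Ct (n + 1 + 1)),
          (ttC k n).baseChange (Rquot Q f) x -
              ζ n ((ttD k n).baseChange (Rquot Q f) (ψ (n + 1 + 1) x)) =
            (dtC n).baseChange (Rquot Q f) (lam (n + 1) x) +
              lam n ((dtC (n + 1)).baseChange (Rquot Q f) x)) ∧
      (∃ mu : ∀ n : ℤ, (Rquot Q f ⊗[Q] Dt (n + 1)) →ₗ[Rquot Q f] (Rquot Q f ⊗[Q] Dt n),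
        ∀ (n : ℤ) (x : Rquot Q f ⊗[Q] Dt (n + 1 + 1)),
          (ttD k n).baseChange (Rquot Q f) x -
              ψ n ((ttC k n).baseChange (Rquot Q f) (ζ (n + 1 + 1) x)) =
            (dtD n).baseChange (Rquot Q f) (mu (n + 1) x) +
              mu n ((dtD (n + 1)).baseChange (Rquot Q f) x)) := by
  have := hCfree
  have := hDfree
  intro k
  exact ⟨exists_homotopy_eisenbud_sub_comp_eisenbud_comp hreg.toIsWeaklyRegular hddC hddD hψ hζ
      hζψ k,
    exists_homotopy_eisenbud_sub_comp_eisenbud_comp hreg.toIsWeaklyRegular hddD hddC hζ hψ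
      hψζ k⟩

/-- Eisenbud operators of homotopy equivalent complexes correspond
under the homotopy equivalence, up to homotopy. -/
theorem eisenbud_operators_of_homotopy_equivalence
    (Q : Type) [CommRing Q] (c : ℕ) (f : Fin c → Q)
    (hreg : RingTheory.Sequence.IsRegular Q (List.ofFn f))
    (Ct Dt : ℤ → Type)
    [∀ n, AddCommGroup (Ct n)] [∀ n, Module Q (Ct n)]
    [∀ n, AddCommGroup (Dt n)] [∀ n, Module Q (Dt n)]
    (hCfree : ∀ n, Module.Free Q (Ct n)) (hCfin : ∀ n, Module.Finite Q (Ct n))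
    (hDfree : ∀ n, Module.Free Q (Dt n)) (hDfin : ∀ n, Module.Finite Q (Dt n))
    (dtC : ∀ n : ℤ, Ct (n + 1) →ₗ[Q] Ct n)
    (dtD : ∀ n : ℤ, Dt (n + 1) →ₗ[Q] Dt n)
    (ttC : Fin c → ∀ n : ℤ, Ct (n + 1 + 1) →ₗ[Q] Ct n)
    (ttD : Fin c → ∀ n : ℤ, Dt (n + 1 + 1) →ₗ[Q] Dt n)
    (hddC : ∀ (n : ℤ) (x : Ct (n + 1 + 1)),
      dtC n (dtC (n + 1) x) = ∑ k, f k • ttC k n x)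
    (hddD : ∀ (n : ℤ) (x : Dt (n + 1 + 1)),
      dtD n (dtD (n + 1) x) = ∑ k, f k • ttD k n x)
    -- the chain maps `ψ : C → D` and `ζ : D → C`
    (ψ : ∀ n : ℤ, (Rquot Q f ⊗[Q] Ct n) →ₗ[Rquot Q f] (Rquot Q f ⊗[Q] Dt n))
    (ζ : ∀ n : ℤ, (Rquot Q f ⊗[Q] Dt n) →ₗ[Rquot Q f] (Rquot Q f ⊗[Q] Ct n))
    (hψ : ∀ (n : ℤ) (x : Rquot Q f ⊗[Q] Ct (n + 1)),
      ψ n ((dtC n).baseChange (Rquot Q f) x) =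
        (dtD n).baseChange (Rquot Q f) (ψ (n + 1) x))
    (hζ : ∀ (n : ℤ) (x : Rquot Q f ⊗[Q] Dt (n + 1)),
      ζ n ((dtD n).baseChange (Rquot Q f) x) =
        (dtC n).baseChange (Rquot Q f) (ζ (n + 1) x))
    -- `ψ ∘ ζ` is homotopic to the identity of `D`
    (hψζ : ∃ h : ∀ n : ℤ, (Rquot Q f ⊗[Q] Dt n) →ₗ[Rquot Q f] (Rquot Q f ⊗[Q] Dt (n + 1)),
      ∀ (n : ℤ) (x : Rquot Q f ⊗[Q] Dt (n + 1)),
        ψ (n + 1) (ζ (n + 1) x) - x =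
          (dtD (n + 1)).baseChange (Rquot Q f) (h (n + 1) x) +
            h n ((dtD n).baseChange (Rquot Q f) x))
    -- `ζ ∘ ψ` is homotopic to the identity of `C`
    (hζψ : ∃ h : ∀ n : ℤ, (Rquot Q f ⊗[Q] Ct n) →ₗ[Rquot Q f] (Rquot Q f ⊗[Q] Ct (n + 1)),
      ∀ (n : ℤ) (x : Rquot Q f ⊗[Q] Ct (n + 1)),
        ζ (n + 1) (ψ (n + 1) x) - x =
          (dtC (n + 1)).baseChange (Rquot Q f) (h (n + 1) x) +
            h n ((dtC n).baseChange (Rquot Q f) x)) :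
    ∀ k : Fin c,
      (∃ lam : ∀ n : ℤ, (Rquot Q f ⊗[Q] Ct (n + 1)) →ₗ[Rquot Q f] (Rquot Q f ⊗[Q] Ct n),
        ∀ (n : ℤ) (x : Rquot Q f ⊗[Q] Ct (n + 1 + 1)),
          (ttC k n).baseChange (Rquot Q f) x -
              ζ n ((ttD k n).baseChange (Rquot Q f) (ψ (n + 1 + 1) x)) =
            (dtC n).baseChange (Rquot Q f) (lam (n + 1) x) +
              lam n ((dtC (n + 1)).baseChange (Rquot Q f) x)) ∧
      (∃ mu : ∀ n : ℤ, (Rquot Q f ⊗[Q] Dt (n + 1)) →ₗ[Rquot Q f] (Rquot Q f ⊗[Q] Dt n),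
        ∀ (n : ℤ) (x : Rquot Q f ⊗[Q] Dt (n + 1 + 1)),
          (ttD k n).baseChange (Rquot Q f) x -
              ψ n ((ttC k n).baseChange (Rquot Q f) (ζ (n + 1 + 1) x)) =
            (dtD n).baseChange (Rquot Q f) (mu (n + 1) x) +
              mu n ((dtD (n + 1)).baseChange (Rquot Q f) x)) :=
  eisenbud_operators_of_homotopy_equivalence_general Q c f hreg Ct Dt hCfree hDfree dtC dtD ttC ttD
    hddC hddD ψ ζ hψ hζ hψζ hζψ
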